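/- arXiv:1302.5804 — 3 statements merged into one kernel-verified Lean document; each statement's English description precedes it below -/
import Mathlib

section
/- Let D : ℝ → ℝ be Lipschitz with constant L, W ∈ L^∞([0,1]²), and define K on C([0,τ]; L^∞([0,1])) by (Ku)(x,t) = g(x) + ∫_0^t ∫_0^1 W(x,y) D(u(y,s) − u(x,s)) dy ds for g ∈ L^∞([0,1]). If τ ≤ (4 L ‖W‖_{L^∞})^{-1}, then K is a contraction with constant 1/2 on the set of u ∈ C([0,τ]; L^∞([0,1])) with u(·,0) = g, with respect to the sup-in-time L^∞ norm. -/
/-!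
Subtracting the two Picard images cancels `g`. With `M` the sup-in-time `L^∞` distance of `u`
and `v`, the integrands differ by at most `‖W‖_∞ · L · 2M` for a.e. `x`. This needs
`|u(s,x) − v(s,x)| ≤ M` for all `s` at once for a.e. `x`: the bound holds a.e. at each rational
time, hence on a common null-set complement, and extends to all times by continuity in `t`.
Integrating over `[0,t]` with `t ≤ τ ≤ (4 L ‖W‖_∞)⁻¹` gives `M / 2`.
-/

open MeasureTheory Set Filter Interval

lemma ae_norm_le_toReal_of_eLpNorm_top_le {α F : Type*} [MeasurableSpace α]
    [NormedAddCommGroup F] {μ : Measure α} {f : α → F} {B : ENNReal} (hB : B ≠ ⊤)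
    (hf : eLpNorm f ⊤ μ ≤ B) : ∀ᵐ x ∂μ, ‖f x‖ ≤ B.toReal := by
  rw [eLpNorm_exponent_top] at hf
  filter_upwards [ae_le_eLpNormEssSup (f := f) (μ := μ)] with x hx
  rw [← ENNReal.ofReal_le_iff_le_toReal hB, ofReal_norm]
  exact hx.trans hf

lemma MeasureTheory.MemLp.ae_aestronglyMeasurable_prodMk_left_and_norm_le {α β F : Type*}
    [MeasurableSpace α] [MeasurableSpace β] [NormedAddCommGroup F] {μ : Measure α}
    {ν : Measure β} [SFinite ν] {f : α × β → F} (hf : MemLp f ⊤ (μ.prod ν)) :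
    ∀ᵐ x ∂μ, AEStronglyMeasurable (fun y => f (x, y)) ν ∧
      ∀ᵐ y ∂ν, ‖f (x, y)‖ ≤ (eLpNorm f ⊤ (μ.prod ν)).toReal := by
  filter_upwards [hf.1.prodMk_left,
    Measure.ae_ae_of_ae_prod (ae_norm_le_toReal_of_eLpNorm_top_le hf.2.ne le_rfl)] with x hm hb
  exact ⟨hm, hb⟩

lemma ae_forall_mem_Icc_of_continuousOn {α X : Type*} [MeasurableSpace α] [TopologicalSpace X]
    {μ : Measure α} {f : ℝ → α → X} {K : Set X} {a b : ℝ} (hab : a < b) (hK : IsClosed K)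
    (hf : ∀ x, ContinuousOn (f · x) (Icc a b)) (h : ∀ t ∈ Icc a b, ∀ᵐ x ∂μ, f t x ∈ K) :
    ∀ᵐ x ∂μ, ∀ t ∈ Icc a b, f t x ∈ K := by
  have hQ : ∀ᵐ x ∂μ, ∀ q : ℚ, (q : ℝ) ∈ Icc a b → f q x ∈ K :=
    ae_all_iff.2 fun q => eventually_imp_distrib_left.2 (h q)
  have hdense : Icc a b ⊆ closure (Ioo a b ∩ range ((↑) : ℚ → ℝ)) := by
    rw [← closure_Ioo hab.ne]
    exact closure_minimal (Rat.denseRange_cast.open_subset_closure_inter isOpen_Ioo)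
      isClosed_closure
  filter_upwards [hQ] with x hx
  have hclosed := (hf x).preimage_isClosed_of_isClosed isClosed_Icc hK
  have hrat : Ioo a b ∩ range ((↑) : ℚ → ℝ) ⊆ Icc a b ∩ (f · x) ⁻¹' K := by
    rintro _ ⟨hq, q, rfl⟩
    exact ⟨Ioo_subset_Icc_self hq, hx q (Ioo_subset_Icc_self hq)⟩
  exact fun t ht => (hclosed.closure_subset_iff.2 hrat (hdense ht)).2

lemma uIoc_zero_one_subset_Icc : Ι (0:ℝ) 1 ⊆ Icc 0 1 := by
  rw [uIoc_of_le zero_le_one]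
  exact Ioc_subset_Icc_self

lemma ae_mem_uIoc_zero_one_of_ae_restrict_Icc {p : ℝ → Prop}
    (h : ∀ᵐ y ∂volume.restrict (Icc (0:ℝ) 1), p y) : ∀ᵐ y, y ∈ Ι (0:ℝ) 1 → p y :=
  (ae_restrict_iff' measurableSet_uIoc).1
    (ae_restrict_of_ae_restrict_of_subset uIoc_zero_one_subset_Icc h)

lemma continuous_of_abs_sub_le_mul_abs {D : ℝ → ℝ} {L : ℝ}
    (hD : ∀ a b, |D a - D b| ≤ L * |a - b|) : Continuous D :=
  LipschitzWith.continuous (K := L.toNNReal) <| .of_dist_le_mul fun a b => by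
    simpa only [Real.dist_eq] using
      (hD a b).trans (mul_le_mul_of_nonneg_right L.le_coe_toNNReal (abs_nonneg _))

noncomputable def nonlocalField (W : ℝ → ℝ → ℝ) (D : ℝ → ℝ) (f : ℝ → ℝ) (x : ℝ) : ℝ :=
  ∫ y in (0:ℝ)..1, W x y * D (f y - f x)

section NonlocalField

variable {W : ℝ → ℝ → ℝ} {D : ℝ → ℝ} {x : ℝ}

lemma aestronglyMeasurable_nonlocal_integrand {f : ℝ → ℝ}
    (hW : AEStronglyMeasurable (W x) (volume.restrict (Icc 0 1))) (hD : Continuous D)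
    (hf : Measurable f) :
    AEStronglyMeasurable (fun y => W x y * D (f y - f x)) (volume.restrict (Ι 0 1)) :=
  (hW.mono_measure (Measure.restrict_mono uIoc_zero_one_subset_Icc le_rfl)).mul
    (hD.measurable.comp (hf.sub measurable_const)).aestronglyMeasurable

lemma exists_bound_nonlocal_integrand {u : ℝ → ℝ → ℝ} {S : Set ℝ} {C Mu : ℝ}
    (hW : ∀ᵐ y ∂volume.restrict (Icc 0 1), |W x y| ≤ C) (hD : Continuous D)
    (hu : ∀ s ∈ S, ∀ y, |u s y| ≤ Mu) :
    ∃ B, ∀ s ∈ S, ∀ᵐ y ∂volume.restrict (Icc 0 1), ‖W x y * D (u s y - u s x)‖ ≤ B := by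
  obtain ⟨B, hB⟩ := (isCompact_Icc (a := -(2 * Mu)) (b := 2 * Mu)).exists_bound_of_continuousOn
    hD.continuousOn
  refine ⟨C * B, fun s hs => ?_⟩
  filter_upwards [hW] with y hy
  have hdiff : u s y - u s x ∈ Icc (-(2 * Mu)) (2 * Mu) := by
    rw [mem_Icc, ← abs_le]
    linarith [abs_sub (u s y) (u s x), hu s hs y, hu s hs x]
  rw [norm_mul, Real.norm_eq_abs]
  exact mul_le_mul hy (hB _ hdiff) (norm_nonneg _) ((abs_nonneg _).trans hy)

lemma intervalIntegrable_nonlocal_integrand {f : ℝ → ℝ} {B : ℝ}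
    (hW : AEStronglyMeasurable (W x) (volume.restrict (Icc 0 1))) (hD : Continuous D)
    (hf : Measurable f) (hB : ∀ᵐ y ∂volume.restrict (Icc 0 1), ‖W x y * D (f y - f x)‖ ≤ B) :
    IntervalIntegrable (fun y => W x y * D (f y - f x)) volume 0 1 :=
  intervalIntegrable_const.mono_fun' (aestronglyMeasurable_nonlocal_integrand hW hD hf)
    (ae_restrict_of_ae_restrict_of_subset uIoc_zero_one_subset_Icc hB)

lemma continuousOn_nonlocalField {u : ℝ → ℝ → ℝ} {S : Set ℝ} {B : ℝ}
    (hW : AEStronglyMeasurable (W x) (volume.restrict (Icc 0 1))) (hD : Continuous D)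
    (hum : ∀ s, Measurable (u s))
    (hB : ∀ s ∈ S, ∀ᵐ y ∂volume.restrict (Icc 0 1), ‖W x y * D (u s y - u s x)‖ ≤ B)
    (hu : ∀ y, ContinuousOn (u · y) S) :
    ContinuousOn (fun s => nonlocalField W D (u s) x) S := fun s hs =>
  intervalIntegral.continuousWithinAt_of_dominated_interval (bound := fun _ => B)
    (Eventually.of_forall fun s => aestronglyMeasurable_nonlocal_integrand hW hD (hum s))
    (eventually_nhdsWithin_of_forall fun s hs => ae_mem_uIoc_zero_one_of_ae_restrict_Icc (hB s hs))
    intervalIntegrable_const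
    (ae_of_all _ fun y _ => continuousWithinAt_const.mul
      ((hD.comp_continuousOn ((hu y).sub (hu x))) s hs))

lemma norm_nonlocalField_sub_le {f g : ℝ → ℝ} {C L M : ℝ}
    (hW : ∀ᵐ y ∂volume.restrict (Icc 0 1), |W x y| ≤ C)
    (hD : ∀ a b, |D a - D b| ≤ L * |a - b|)
    (hf : IntervalIntegrable (fun y => W x y * D (f y - f x)) volume 0 1)
    (hg : IntervalIntegrable (fun y => W x y * D (g y - g x)) volume 0 1)
    (hfg : ∀ᵐ y ∂volume.restrict (Icc 0 1), |f y - g y| ≤ M) (hx : |f x - g x| ≤ M) :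
    ‖nonlocalField W D f x - nonlocalField W D g x‖ ≤ 2 * (L * C) * M := by
  have hL : 0 ≤ L := by simpa using (abs_nonneg _).trans (hD 1 0)
  have hbound : ∀ᵐ y ∂volume.restrict (Icc 0 1),
      ‖W x y * D (f y - f x) - W x y * D (g y - g x)‖ ≤ 2 * (L * C) * M := by
    filter_upwards [hW, hfg] with y hWy hy
    have hDy : |D (f y - f x) - D (g y - g x)| ≤ L * (2 * M) := by
      refine (hD _ _).trans (mul_le_mul_of_nonneg_left ?_ hL)
      calc |(f y - f x) - (g y - g x)| = |(f y - g y) - (f x - g x)| := by ring_nf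
        _ ≤ |f y - g y| + |f x - g x| := abs_sub _ _
        _ ≤ 2 * M := by linarith
    rw [← mul_sub, Real.norm_eq_abs, abs_mul]
    calc |W x y| * |D (f y - f x) - D (g y - g x)| ≤ C * (L * (2 * M)) :=
          mul_le_mul hWy hDy (abs_nonneg _) ((abs_nonneg _).trans hWy)
      _ = 2 * (L * C) * M := by ring
  unfold nonlocalField
  rw [← intervalIntegral.integral_sub hf hg]
  simpa using intervalIntegral.norm_integral_le_of_norm_le_const_ae
    (ae_mem_uIoc_zero_one_of_ae_restrict_Icc hbound)

lemma norm_integral_nonlocalField_sub_le {u v : ℝ → ℝ → ℝ} {C L M Mu Mv τ t : ℝ}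
    (hWm : AEStronglyMeasurable (W x) (volume.restrict (Icc 0 1)))
    (hWb : ∀ᵐ y ∂volume.restrict (Icc 0 1), |W x y| ≤ C)
    (hD : ∀ a b, |D a - D b| ≤ L * |a - b|)
    (hum : Measurable (Function.uncurry u)) (hvm : Measurable (Function.uncurry v))
    (hub : ∀ s ∈ Icc 0 τ, ∀ y, |u s y| ≤ Mu) (hvb : ∀ s ∈ Icc 0 τ, ∀ y, |v s y| ≤ Mv)
    (huc : ∀ y, ContinuousOn (u · y) (Icc 0 τ)) (hvc : ∀ y, ContinuousOn (v · y) (Icc 0 τ))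
    (huv : ∀ s ∈ Icc 0 τ, ∀ᵐ y ∂volume.restrict (Icc 0 1), |u s y - v s y| ≤ M)
    (hx : ∀ s ∈ Icc 0 τ, |u s x - v s x| ≤ M) (ht : t ∈ Icc 0 τ) :
    ‖(∫ s in (0:ℝ)..t, nonlocalField W D (u s) x) - ∫ s in (0:ℝ)..t, nonlocalField W D (v s) x‖
      ≤ 2 * (L * C) * M * t := by
  have hDc := continuous_of_abs_sub_le_mul_abs hD
  obtain ⟨Bu, hBu⟩ := exists_bound_nonlocal_integrand hWb hDc hub
  obtain ⟨Bv, hBv⟩ := exists_bound_nonlocal_integrand hWb hDc hvb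
  have hsub : uIcc 0 t ⊆ Icc 0 τ := by
    rw [uIcc_of_le ht.1]
    exact Icc_subset_Icc_right ht.2
  have hmem : ∀ s ∈ Ι 0 t, s ∈ Icc 0 τ := fun s hs => hsub (uIoc_subset_uIcc hs)
  have hu := continuousOn_nonlocalField hWm hDc (fun _ => hum.of_uncurry_left) hBu huc
  have hv := continuousOn_nonlocalField hWm hDc (fun _ => hvm.of_uncurry_left) hBv hvc
  rw [← intervalIntegral.integral_sub (hu.mono hsub).intervalIntegrable
    (hv.mono hsub).intervalIntegrable]
  simpa [abs_of_nonneg ht.1] using intervalIntegral.norm_integral_le_of_norm_le_const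
    fun s hs => norm_nonlocalField_sub_le hWb hD
      (intervalIntegrable_nonlocal_integrand hWm hDc hum.of_uncurry_left (hBu s (hmem s hs)))
      (intervalIntegrable_nonlocal_integrand hWm hDc hvm.of_uncurry_left (hBv s (hmem s hs)))
      (huv s (hmem s hs)) (hx s (hmem s hs))

end NonlocalField

theorem picard_operator_contraction_general
    (D : ℝ → ℝ) (L : ℝ) (hD : ∀ a b : ℝ, |D a - D b| ≤ L * |a - b|)
    (W : ℝ → ℝ → ℝ)
    (hWmem : MemLp (fun p : ℝ × ℝ => W p.1 p.2) ⊤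
      (volume.restrict (Icc 0 1 ×ˢ Icc 0 1)))
    (g : ℝ → ℝ)
    (τ : ℝ) (hτpos : 0 < τ)
    (hτ : τ ≤ (4 * L * (eLpNorm (fun p : ℝ × ℝ => W p.1 p.2) ⊤
      (volume.restrict (Icc 0 1 ×ˢ Icc 0 1))).toReal)⁻¹)
    (u v : ℝ → ℝ → ℝ)
    (humeas : Measurable (Function.uncurry u)) (hvmeas : Measurable (Function.uncurry v))
    (hubd : ∃ M, ∀ t ∈ Icc 0 τ, ∀ x, |u t x| ≤ M)
    (hvbd : ∃ M, ∀ t ∈ Icc 0 τ, ∀ x, |v t x| ≤ M)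
    (hucont : ∀ x, ContinuousOn (fun t => u t x) (Icc 0 τ))
    (hvcont : ∀ x, ContinuousOn (fun t => v t x) (Icc 0 τ)) :
    (⨆ t : Icc 0 τ, eLpNorm (fun x =>
        (g x + ∫ s in (0:ℝ)..(t:ℝ), ∫ y in (0:ℝ)..1, W x y * D (u s y - u s x)) -
        (g x + ∫ s in (0:ℝ)..(t:ℝ), ∫ y in (0:ℝ)..1, W x y * D (v s y - v s x))) ⊤
        (volume.restrict (Icc (0:ℝ) 1)))
      ≤ (1/2 : ENNReal) *
        ⨆ t : Icc 0 τ, eLpNorm (fun x => u (t:ℝ) x - v (t:ℝ) x) ⊤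
          (volume.restrict (Icc (0:ℝ) 1)) := by
  set μ := volume.restrict (Icc (0:ℝ) 1)
  have hμ2 : volume.restrict (Icc 0 1 ×ˢ Icc 0 1) = μ.prod μ := by
    rw [Measure.prod_restrict, ← Measure.volume_eq_prod]
  rw [hμ2] at hWmem hτ
  set C := (eLpNorm (fun p : ℝ × ℝ => W p.1 p.2) ⊤ (μ.prod μ)).toReal
  set M := ⨆ t : Icc 0 τ, eLpNorm (fun x => u (t:ℝ) x - v (t:ℝ) x) ⊤ μ
  rcases eq_or_ne M ⊤ with hM | hM
  · simp [hM]
  have huv : ∀ s ∈ Icc 0 τ, ∀ᵐ y ∂μ, |u s y - v s y| ≤ M.toReal := fun s hs =>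
    ae_norm_le_toReal_of_eLpNorm_top_le hM
      (le_iSup (fun t : Icc 0 τ => eLpNorm (fun x => u (t:ℝ) x - v (t:ℝ) x) ⊤ μ) ⟨s, hs⟩)
  have hx : ∀ᵐ x ∂μ, ∀ s ∈ Icc 0 τ, |u s x - v s x| ≤ M.toReal :=
    ae_forall_mem_Icc_of_continuousOn (f := fun s x => |u s x - v s x|) hτpos isClosed_Iic
      (fun x => ((hucont x).sub (hvcont x)).abs) huv
  refine iSup_le fun t => ?_
  have hcontract : 2 * (L * C) * M.toReal * t ≤ M.toReal / 2 := by
    have hLC : 0 < 4 * L * C := inv_pos.1 (hτpos.trans_le hτ)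
    have ht := mul_le_mul_of_nonneg_right (t.2.2.trans hτ) hLC.le
    rw [inv_mul_cancel₀ hLC.ne'] at ht
    nlinarith [ENNReal.toReal_nonneg (a := M)]
  rw [eLpNorm_exponent_top]
  calc _ ≤ ENNReal.ofReal (M.toReal / 2) := eLpNormEssSup_le_of_ae_bound ?_
    _ = 1 / 2 * M := by
      rw [ENNReal.ofReal_div_of_pos two_pos, ENNReal.ofReal_toReal hM, ENNReal.ofReal_ofNat,
        ENNReal.div_eq_inv_mul, one_div]
  filter_upwards [hWmem.ae_aestronglyMeasurable_prodMk_left_and_norm_le, hx] with x ⟨hWm, hWb⟩ hx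
  rw [add_sub_add_left_eq_sub]
  obtain ⟨Mu, hMu⟩ := hubd
  obtain ⟨Mv, hMv⟩ := hvbd
  exact (norm_integral_nonlocalField_sub_le hWm hWb hD humeas hvmeas hMu hMv hucont hvcont
    huv hx t.2).trans hcontract

/-- The Picard operator `(Ku)(x,t) = g(x) + ∫_0^t ∫_0^1 W(x,y) D(u(y,s) − u(x,s)) dy ds`
is a contraction with constant `1/2` on `{u ∈ C([0,τ]; L^∞) : u(0) = g}` provided
`τ ≤ (4 L ‖W‖_{L^∞})⁻¹`, in the norm `max_{t∈[0,τ]} ‖u(t) − v(t)‖_{L^∞([0,1])}`. -/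
theorem picard_operator_contraction
    (D : ℝ → ℝ) (L : ℝ) (hL : 0 < L) (hD : ∀ a b : ℝ, |D a - D b| ≤ L * |a - b|)
    (W : ℝ → ℝ → ℝ)
    (hWmem : MemLp (fun p : ℝ × ℝ => W p.1 p.2) ⊤
      (volume.restrict (Icc 0 1 ×ˢ Icc 0 1)))
    (g : ℝ → ℝ) (hg : MemLp g ⊤ (volume.restrict (Icc (0:ℝ) 1)))
    (τ : ℝ) (hτpos : 0 < τ)
    (hτ : τ ≤ (4 * L * (eLpNorm (fun p : ℝ × ℝ => W p.1 p.2) ⊤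
      (volume.restrict (Icc 0 1 ×ˢ Icc 0 1))).toReal)⁻¹)
    (u v : ℝ → ℝ → ℝ)
    (hu0 : ∀ x, u 0 x = g x) (hv0 : ∀ x, v 0 x = g x)
    (humeas : Measurable (Function.uncurry u)) (hvmeas : Measurable (Function.uncurry v))
    (hubd : ∃ M, ∀ t ∈ Icc 0 τ, ∀ x, |u t x| ≤ M)
    (hvbd : ∃ M, ∀ t ∈ Icc 0 τ, ∀ x, |v t x| ≤ M)
    (hucont : ∀ x, ContinuousOn (fun t => u t x) (Icc 0 τ))
    (hvcont : ∀ x, ContinuousOn (fun t => v t x) (Icc 0 τ)) :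
    (⨆ t : Icc 0 τ, eLpNorm (fun x =>
        (g x + ∫ s in (0:ℝ)..(t:ℝ), ∫ y in (0:ℝ)..1, W x y * D (u s y - u s x)) -
        (g x + ∫ s in (0:ℝ)..(t:ℝ), ∫ y in (0:ℝ)..1, W x y * D (v s y - v s x))) ⊤
        (volume.restrict (Icc (0:ℝ) 1)))
      ≤ (1/2 : ENNReal) *
        ⨆ t : Icc 0 τ, eLpNorm (fun x => u (t:ℝ) x - v (t:ℝ) x) ⊤
          (volume.restrict (Icc (0:ℝ) 1)) :=
  picard_operator_contraction_general D L hD W hWmem g τ hτpos hτ u v humeas hvmeas hubd hvbd hucont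
    hvcont
end

section
/- Let D : ℝ → ℝ be Lipschitz, W ∈ L^∞([0,1]²), and g ∈ L^∞([0,1]). Then for every T > 0 there exists a unique continuously differentiable solution u : [−T, T] → L^∞([0,1]) of the initial value problem ∂u/∂t(x,t) = ∫_0^1 W(x,y) D(u(y,t) − u(x,t)) dy with u(x,0) = g(x). -/
/-!
Because `D` is Lipschitz and `W` is bounded, the right-hand side
`F(v)(x) = ∫_0^1 W(x,y) D(v(y) - v(x)) dy` maps bounded measurable functions to bounded
measurable ones and is Lipschitz for the sup norm, with constant `K = 2 Lip(D) ‖W‖_∞`. The Picard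
iterates `u_{n+1}(t) = g + ∫_0^t F(u_n(s)) ds` therefore satisfy the Volterra estimate
`|u_{n+1} - u_n|(t) ≤ A (K|t|)^n / n!`, so they converge uniformly on bounded time intervals to a
solution of the integral equation; its time derivative `F(u(t))` is continuous because `u` is
Lipschitz in time. The same estimate applied to the difference of two solutions forces it to vanish.
-/

open MeasureTheory Set Filter Topology
open scoped NNReal Nat Interval

namespace NonlocalHeat

theorem intervalIntegrable_of_abs_le {f : ℝ → ℝ} {a b C : ℝ} (hf : Measurable f)
    (hC : ∀ s ∈ Ι a b, |f s| ≤ C) : IntervalIntegrable f volume a b :=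
  (intervalIntegrable_const (c := C)).mono_fun' hf.aestronglyMeasurable
    (ae_restrict_of_forall_mem measurableSet_uIoc hC)

theorem uIoc_zero_subset_Icc {S t : ℝ} (ht : t ∈ Icc (-S) S) : Ι 0 t ⊆ Icc (-S) S :=
  uIoc_subset_uIcc.trans
    (uIcc_subset_Icc ⟨by linarith [ht.1, ht.2], by linarith [ht.1, ht.2]⟩ ht)

theorem eq_add_integral_of_hasDerivAt {f f' : ℝ → ℝ} {T t : ℝ}
    (hf : ∀ s ∈ Icc (-T) T, HasDerivAt f (f' s) s) (hf' : ContinuousOn f' (Icc (-T) T))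
    (ht : t ∈ Icc (-T) T) : f t = f 0 + ∫ s in (0:ℝ)..t, f' s := by
  have hsub : uIcc 0 t ⊆ Icc (-T) T :=
    uIcc_subset_Icc ⟨by linarith [ht.1, ht.2], by linarith [ht.1, ht.2]⟩ ht
  rw [intervalIntegral.integral_eq_sub_of_hasDerivAt (fun s hs => hf s (hsub hs))
    ((hf'.mono hsub).intervalIntegrable)]
  ring

theorem abs_integral_le_mul_pow {f : ℝ → ℝ} {C t : ℝ} {n : ℕ} (hC : 0 ≤ C)
    (hf : ∀ s ∈ Ι 0 t, |f s| ≤ C * |s| ^ n) :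
    |∫ s in (0:ℝ)..t, f s| ≤ C * (|t| ^ (n + 1) / (n + 1)) := by
  have hpow : ∫ s in Ι 0 t, |s| ^ n = |t| ^ (n + 1) / (n + 1) := by
    simpa only [sub_zero] using integral_pow_abs_sub_uIoc (a := 0) (b := t) (n := n)
  calc |∫ s in (0:ℝ)..t, f s| ≤ |∫ s in (0:ℝ)..t, C * |s| ^ n| := by
        simpa only [Real.norm_eq_abs] using
          intervalIntegral.norm_integral_le_abs_of_norm_le (f := f)
          (ae_restrict_of_forall_mem measurableSet_uIoc hf)
          ((by fun_prop : Continuous fun s : ℝ => C * |s| ^ n).intervalIntegrable _ _)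
    _ = C * (|t| ^ (n + 1) / (n + 1)) := by
        rw [intervalIntegral.abs_intervalIntegral_eq, integral_const_mul, hpow, abs_of_nonneg]
        positivity

theorem abs_le_of_volterra {α : Type*} {X : Set α} {T A K : ℝ} (hA : 0 ≤ A) (hK : 0 ≤ K)
    (e : ℕ → ℝ → α → ℝ) (h0 : ∀ t ∈ Icc (-T) T, ∀ x ∈ X, |e 0 t x| ≤ A)
    (hstep : ∀ (n : ℕ) (c : ℝ), 0 ≤ c → (∀ s ∈ Icc (-T) T, ∀ y ∈ X, |e n s y| ≤ c * |s| ^ n) →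
      ∀ t ∈ Icc (-T) T, ∀ x ∈ X, |e (n + 1) t x| ≤ K * c * (|t| ^ (n + 1) / (n + 1)))
    (n : ℕ) : ∀ t ∈ Icc (-T) T, ∀ x ∈ X, |e n t x| ≤ A * K ^ n / n ! * |t| ^ n := by
  induction n with
  | zero => simpa using h0
  | succ n ih =>
    intro t ht x hx
    refine (hstep n _ (by positivity) ih t ht x hx).trans_eq ?_
    rw [Nat.factorial_succ]
    push_cast
    field_simp
    ring

theorem eq_zero_of_volterra {α : Type*} {X : Set α} {T A K : ℝ} (hA : 0 ≤ A) (hK : 0 ≤ K)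
    (d : ℝ → α → ℝ) (hd : ∀ t ∈ Icc (-T) T, ∀ x ∈ X, |d t x| ≤ A)
    (hstep : ∀ (n : ℕ) (c : ℝ), 0 ≤ c → (∀ s ∈ Icc (-T) T, ∀ y ∈ X, |d s y| ≤ c * |s| ^ n) →
      ∀ t ∈ Icc (-T) T, ∀ x ∈ X, |d t x| ≤ K * c * (|t| ^ (n + 1) / (n + 1)))
    {t : ℝ} (ht : t ∈ Icc (-T) T) {x : α} (hx : x ∈ X) : d t x = 0 := by
  have hbound n := abs_le_of_volterra hA hK (fun _ => d) hd hstep n t ht x hx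
  have hlim : Tendsto (fun n : ℕ => A * ((K * |t|) ^ n / n !)) atTop (𝓝 0) := by
    simpa using (FloorSemiring.tendsto_pow_div_factorial_atTop (K * |t|)).const_mul A
  refine abs_nonpos_iff.1 (ge_of_tendsto' hlim fun n => (hbound n).trans_eq ?_)
  ring

theorem measurable_intervalIntegral_of_uncurry {α : Type*} [MeasurableSpace α] {f : α → ℝ → ℝ}
    (hf : Measurable (Function.uncurry f)) (a b : ℝ) :
    Measurable fun z => ∫ y in a..b, f z y :=
  (hf.stronglyMeasurable.integral_prod_right' (ν := volume.restrict (Ioc a b))).measurable.sub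
    (hf.stronglyMeasurable.integral_prod_right' (ν := volume.restrict (Ioc b a))).measurable

theorem measurable_primitive {h : ℝ → ℝ → ℝ} (hh : Measurable (Function.uncurry h)) :
    Measurable (Function.uncurry fun t x => ∫ s in (0:ℝ)..t, h s x) := by
  -- a fixed domain of integration makes `integral_prod_right'` applicable
  have hrescale : (Function.uncurry fun t x => ∫ s in (0:ℝ)..t, h s x) =
      fun p : ℝ × ℝ => p.1 * ∫ r in (0:ℝ)..1, h (p.1 * r) p.2 := by
    ext p
    change ∫ s in (0:ℝ)..p.1, h s p.2 = _
    simpa using (intervalIntegral.smul_integral_comp_mul_left (fun s => h s p.2) p.1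
      (a := 0) (b := 1)).symm
  rw [hrescale]
  refine measurable_fst.mul (measurable_intervalIntegral_of_uncurry ?_ 0 1)
  exact hh.comp ((measurable_fst.fst.mul measurable_snd).prodMk measurable_fst.snd)

noncomputable def nonlocalOp (W : ℝ → ℝ → ℝ) (D : ℝ → ℝ) (v : ℝ → ℝ) (x : ℝ) : ℝ :=
  ∫ y in (0:ℝ)..1, W x y * D (v y - v x)

def UniformlyBoundedOn (u : ℝ → ℝ → ℝ) (I : Set ℝ) : Prop :=
  ∃ M, ∀ t ∈ I, ∀ x, |u t x| ≤ M

section Operator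

variable {W : ℝ → ℝ → ℝ} {D : ℝ → ℝ} {K : ℝ≥0} {CW : ℝ}

theorem abs_le_abs_add_mul_of_lipschitzWith (hD : LipschitzWith K D) (z : ℝ) :
    |D z| ≤ |D 0| + K * |z| := by
  have h := hD.dist_le_mul z 0
  rw [Real.dist_eq, Real.dist_eq, sub_zero] at h
  linarith [abs_sub_abs_le_abs_sub (D z) (D 0)]

theorem abs_nonlocalOp_integrand_le (hD : LipschitzWith K D) (hW : ∀ x y, |W x y| ≤ CW)
    {v : ℝ → ℝ} {M : ℝ} (hv : ∀ y, |v y| ≤ M) (x y : ℝ) :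
    |W x y * D (v y - v x)| ≤ CW * (|D 0| + K * (2 * M)) := by
  have hdiff : |v y - v x| ≤ 2 * M := by linarith [abs_sub (v y) (v x), hv x, hv y]
  rw [abs_mul]
  gcongr
  · exact (abs_nonneg _).trans (hW x y)
  · exact hW x y
  · exact (abs_le_abs_add_mul_of_lipschitzWith hD _).trans (by gcongr)

theorem intervalIntegrable_nonlocalOp_integrand (hD : LipschitzWith K D)
    (hW : ∀ x y, |W x y| ≤ CW) (hWm : Measurable (Function.uncurry W)) {v : ℝ → ℝ}
    (hvm : Measurable v) {M : ℝ} (hv : ∀ y, |v y| ≤ M) (x : ℝ) :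
    IntervalIntegrable (fun y => W x y * D (v y - v x)) volume 0 1 :=
  intervalIntegrable_of_abs_le
    ((hWm.comp measurable_prodMk_left).mul (hD.continuous.measurable.comp (hvm.sub_const _)))
    fun y _ => abs_nonlocalOp_integrand_le hD hW hv x y

theorem abs_nonlocalOp_le (hD : LipschitzWith K D) (hW : ∀ x y, |W x y| ≤ CW)
    {v : ℝ → ℝ} {M : ℝ} (hv : ∀ y, |v y| ≤ M) (x : ℝ) :
    |nonlocalOp W D v x| ≤ CW * (|D 0| + K * (2 * M)) := by
  unfold nonlocalOp
  simpa using intervalIntegral.norm_integral_le_of_norm_le_const (a := 0) (b := 1)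
    (f := fun y => W x y * D (v y - v x)) fun y _ => abs_nonlocalOp_integrand_le hD hW hv x y

/-- The set `A` is arbitrary because competing solutions are only controlled for `x ∈ [0,1]`. -/
theorem abs_nonlocalOp_sub_le (hD : LipschitzWith K D) (hW : ∀ x y, |W x y| ≤ CW)
    (hWm : Measurable (Function.uncurry W)) {v w : ℝ → ℝ} (hvm : Measurable v)
    (hwm : Measurable w) {Mv Mw : ℝ} (hv : ∀ y, |v y| ≤ Mv) (hw : ∀ y, |w y| ≤ Mw)
    {A : Set ℝ} (hA : Icc 0 1 ⊆ A) {x δ : ℝ} (hx : x ∈ A) (hδ : ∀ y ∈ A, |v y - w y| ≤ δ) :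
    |nonlocalOp W D v x - nonlocalOp W D w x| ≤ 2 * K * CW * δ := by
  have hpt : ∀ y ∈ Ι (0:ℝ) 1,
      ‖W x y * D (v y - v x) - W x y * D (w y - w x)‖ ≤ 2 * K * CW * δ := by
    intro y hy
    have hyA : y ∈ A := hA (Ioc_subset_Icc_self (by rwa [uIoc_of_le zero_le_one] at hy))
    have hD' : |D (v y - v x) - D (w y - w x)| ≤ K * (2 * δ) := by
      calc |D (v y - v x) - D (w y - w x)| ≤ K * |(v y - v x) - (w y - w x)| := by
            simpa only [Real.dist_eq] using hD.dist_le_mul _ _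
        _ ≤ K * (2 * δ) := by
            rw [show (v y - v x) - (w y - w x) = (v y - w y) - (v x - w x) by ring]
            gcongr
            linarith [abs_sub (v y - w y) (v x - w x), hδ y hyA, hδ x hx]
    rw [Real.norm_eq_abs, ← mul_sub, abs_mul]
    calc |W x y| * |D (v y - v x) - D (w y - w x)| ≤ CW * (K * (2 * δ)) :=
          mul_le_mul (hW x y) hD' (abs_nonneg _) ((abs_nonneg _).trans (hW x y))
      _ = 2 * K * CW * δ := by ring
  unfold nonlocalOp
  rw [← intervalIntegral.integral_sub (intervalIntegrable_nonlocalOp_integrand hD hW hWm hvm hv x)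
    (intervalIntegrable_nonlocalOp_integrand hD hW hWm hwm hw x)]
  simpa using intervalIntegral.norm_integral_le_of_norm_le_const hpt

end Operator

section Trajectory

variable {W : ℝ → ℝ → ℝ} {D : ℝ → ℝ} {K : ℝ≥0} {CW : ℝ} {u w : ℝ → ℝ → ℝ}

theorem measurable_nonlocalOp (hD : LipschitzWith K D) (hWm : Measurable (Function.uncurry W))
    (hu : Measurable (Function.uncurry u)) :
    Measurable (Function.uncurry fun t x => nonlocalOp W D (u t) x) :=
  measurable_intervalIntegral_of_uncurry
    (f := fun (p : ℝ × ℝ) y => W p.2 y * D (u p.1 y - u p.1 p.2))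
    ((hWm.comp (measurable_fst.snd.prodMk measurable_snd)).mul (hD.continuous.measurable.comp
      ((hu.comp (measurable_fst.fst.prodMk measurable_snd)).sub (hu.comp measurable_fst)))) 0 1

theorem abs_integral_nonlocalOp_le (hD : LipschitzWith K D) (hW : ∀ x y, |W x y| ≤ CW)
    {a b M : ℝ} (hu : ∀ s ∈ Ι a b, ∀ y, |u s y| ≤ M) (x : ℝ) :
    |∫ s in a..b, nonlocalOp W D (u s) x| ≤ CW * (|D 0| + K * (2 * M)) * |b - a| := by
  simpa using intervalIntegral.norm_integral_le_of_norm_le_const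
    (f := fun s => nonlocalOp W D (u s) x) fun s hs => abs_nonlocalOp_le hD hW (hu s hs) x

theorem intervalIntegrable_nonlocalOp (hD : LipschitzWith K D) (hW : ∀ x y, |W x y| ≤ CW)
    (hWm : Measurable (Function.uncurry W)) (hu : Measurable (Function.uncurry u)) {S t : ℝ}
    (hub : UniformlyBoundedOn u (Icc (-S) S)) (ht : t ∈ Icc (-S) S) (x : ℝ) :
    IntervalIntegrable (fun s => nonlocalOp W D (u s) x) volume 0 t :=
  let ⟨_, hM⟩ := hub
  intervalIntegrable_of_abs_le ((measurable_nonlocalOp hD hWm hu).comp measurable_prodMk_right)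
    fun s hs => abs_nonlocalOp_le hD hW (hM s (uIoc_zero_subset_Icc ht hs)) x

theorem abs_integral_nonlocalOp_sub_le (hD : LipschitzWith K D) (hW : ∀ x y, |W x y| ≤ CW)
    (hWm : Measurable (Function.uncurry W)) (hu : Measurable (Function.uncurry u))
    (hw : Measurable (Function.uncurry w)) {S : ℝ} (hub : UniformlyBoundedOn u (Icc (-S) S))
    (hwb : UniformlyBoundedOn w (Icc (-S) S)) {A : Set ℝ} (hA : Icc 0 1 ⊆ A) {c : ℝ} {n : ℕ}
    (hc : 0 ≤ c) (huw : ∀ s ∈ Icc (-S) S, ∀ y ∈ A, |u s y - w s y| ≤ c * |s| ^ n)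
    {t : ℝ} (ht : t ∈ Icc (-S) S) {x : ℝ} (hx : x ∈ A) :
    |(∫ s in (0:ℝ)..t, nonlocalOp W D (u s) x) - ∫ s in (0:ℝ)..t, nonlocalOp W D (w s) x| ≤
      2 * K * CW * c * (|t| ^ (n + 1) / (n + 1)) := by
  have hCW : 0 ≤ CW := (abs_nonneg _).trans (hW 0 0)
  obtain ⟨Mu, hMu⟩ := hub
  obtain ⟨Mw, hMw⟩ := hwb
  rw [← intervalIntegral.integral_sub (intervalIntegrable_nonlocalOp hD hW hWm hu ⟨Mu, hMu⟩ ht x)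
    (intervalIntegrable_nonlocalOp hD hW hWm hw ⟨Mw, hMw⟩ ht x)]
  refine abs_integral_le_mul_pow (by positivity) fun s hs => ?_
  have hs' := uIoc_zero_subset_Icc ht hs
  refine (abs_nonlocalOp_sub_le hD hW hWm (hu.comp measurable_prodMk_left)
    (hw.comp measurable_prodMk_left) (hMu s hs') (hMw s hs') hA hx (huw s hs')).trans_eq ?_
  ring

end Trajectory

section Picard

noncomputable def picardIter (W : ℝ → ℝ → ℝ) (D g : ℝ → ℝ) : ℕ → ℝ → ℝ → ℝ
  | 0 => fun _ x => g x
  | n + 1 => fun t x => g x + ∫ s in (0:ℝ)..t, nonlocalOp W D (picardIter W D g n s) x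

/-- Written as a telescoping series, so that the Weierstrass M-test gives uniform convergence. -/
noncomputable def picardLimit (W : ℝ → ℝ → ℝ) (D g : ℝ → ℝ) (t x : ℝ) : ℝ :=
  g x + ∑' n, (picardIter W D g (n + 1) t x - picardIter W D g n t x)

variable {W : ℝ → ℝ → ℝ} {D g : ℝ → ℝ} {K : ℝ≥0} {CW Cg : ℝ}

theorem picardIter_eq_add_sum (n : ℕ) (t x : ℝ) :
    picardIter W D g n t x =
      g x + ∑ k ∈ Finset.range n, (picardIter W D g (k + 1) t x - picardIter W D g k t x) := by
  rw [Finset.sum_range_sub (fun k => picardIter W D g k t x)]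
  simp only [picardIter]
  ring

theorem measurable_picardIter (hD : LipschitzWith K D) (hWm : Measurable (Function.uncurry W))
    (hgm : Measurable g) : ∀ n, Measurable (Function.uncurry (picardIter W D g n))
  | 0 => hgm.comp measurable_snd
  | n + 1 => (hgm.comp measurable_snd).add
      (measurable_primitive (measurable_nonlocalOp hD hWm (measurable_picardIter hD hWm hgm n)))

theorem uniformlyBoundedOn_picardIter (hD : LipschitzWith K D) (hW : ∀ x y, |W x y| ≤ CW)
    (hg : ∀ x, |g x| ≤ Cg) (S : ℝ) : ∀ n, UniformlyBoundedOn (picardIter W D g n) (Icc (-S) S)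
  | 0 => ⟨Cg, fun _ _ x => hg x⟩
  | n + 1 => by
    obtain ⟨M, hM⟩ := uniformlyBoundedOn_picardIter hD hW hg S n
    refine ⟨Cg + |CW * (|D 0| + K * (2 * M))| * S, fun t ht x => ?_⟩
    have hint := abs_integral_nonlocalOp_le hD hW (fun s hs => hM s (uIoc_zero_subset_Icc ht hs)) x
    have htS : |t - 0| ≤ S := by simpa using abs_le.2 ht
    calc |picardIter W D g (n + 1) t x|
        ≤ |g x| + |∫ s in (0:ℝ)..t, nonlocalOp W D (picardIter W D g n s) x| := abs_add_le _ _
      _ ≤ Cg + |CW * (|D 0| + K * (2 * M))| * S :=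
          add_le_add (hg x) (hint.trans (mul_le_mul (le_abs_self _) htS (abs_nonneg _)
            (abs_nonneg _)))

theorem abs_picardIter_succ_sub_le (hD : LipschitzWith K D) (hW : ∀ x y, |W x y| ≤ CW)
    (hWm : Measurable (Function.uncurry W)) (hgm : Measurable g) (hg : ∀ x, |g x| ≤ Cg)
    (S : ℝ) : ∃ A, 0 ≤ A ∧ ∀ n, ∀ t ∈ Icc (-S) S, ∀ x,
      |picardIter W D g (n + 1) t x - picardIter W D g n t x| ≤
        A * (2 * K * CW) ^ n / n ! * |t| ^ n := by
  have hCW : 0 ≤ CW := (abs_nonneg _).trans (hW 0 0)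
  have hb := uniformlyBoundedOn_picardIter hD hW hg S
  have hm := measurable_picardIter hD hWm hgm
  obtain ⟨M₀, hM₀⟩ := hb 0
  obtain ⟨M₁, hM₁⟩ := hb 1
  refine ⟨|M₁| + |M₀|, by positivity, fun n t ht x =>
    abs_le_of_volterra (X := univ) (by positivity) (by positivity)
      (fun n t x => picardIter W D g (n + 1) t x - picardIter W D g n t x) ?_ ?_ n t ht x trivial⟩
  · intro t ht x _
    linarith [abs_sub (picardIter W D g 1 t x) (picardIter W D g 0 t x), hM₁ t ht x, hM₀ t ht x,
      le_abs_self M₁, le_abs_self M₀]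
  · intro n c hc hn t ht x _
    simp only [picardIter, add_sub_add_left_eq_sub]
    exact abs_integral_nonlocalOp_sub_le hD hW hWm (hm (n + 1)) (hm n) (hb (n + 1)) (hb n)
      (subset_univ _) hc hn ht trivial

theorem tendstoUniformlyOn_picardIter (hD : LipschitzWith K D) (hW : ∀ x y, |W x y| ≤ CW)
    (hWm : Measurable (Function.uncurry W)) (hgm : Measurable g) (hg : ∀ x, |g x| ≤ Cg)
    (S : ℝ) :
    TendstoUniformlyOn (fun n (p : ℝ × ℝ) => picardIter W D g n p.1 p.2)
      (fun p => picardLimit W D g p.1 p.2) atTop (Icc (-S) S ×ˢ univ) := by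
  obtain ⟨A, hA, hdiff⟩ := abs_picardIter_succ_sub_le hD hW hWm hgm hg S
  have hsum : Summable fun n : ℕ => A * (2 * K * CW) ^ n / n ! * S ^ n :=
    ((Real.summable_pow_div_factorial (2 * K * CW * S)).mul_left A).congr fun n => by ring
  have hseries := tendstoUniformlyOn_tsum_nat hsum
    (f := fun n (p : ℝ × ℝ) => picardIter W D g (n + 1) p.1 p.2 - picardIter W D g n p.1 p.2)
    (s := Icc (-S) S ×ˢ univ) fun n p hp => (hdiff n p.1 hp.1 p.2).trans <| by
      have hCW : 0 ≤ CW := (abs_nonneg _).trans (hW 0 0)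
      gcongr
      exact abs_le.2 hp.1
  rw [Metric.tendstoUniformlyOn_iff] at hseries ⊢
  intro ε hε
  filter_upwards [hseries ε hε] with n hn p hp
  rw [picardIter_eq_add_sum, picardLimit, dist_add_left]
  exact hn p hp

theorem tendsto_picardIter (hD : LipschitzWith K D) (hW : ∀ x y, |W x y| ≤ CW)
    (hWm : Measurable (Function.uncurry W)) (hgm : Measurable g) (hg : ∀ x, |g x| ≤ Cg)
    (t x : ℝ) : Tendsto (fun n => picardIter W D g n t x) atTop (𝓝 (picardLimit W D g t x)) :=
  (tendstoUniformlyOn_picardIter hD hW hWm hgm hg |t|).tendsto_at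
    (x := (t, x)) ⟨abs_le.1 le_rfl, trivial⟩

end Picard

structure IsMildSolution (W : ℝ → ℝ → ℝ) (D g : ℝ → ℝ) (u : ℝ → ℝ → ℝ) : Prop where
  measurable : Measurable (Function.uncurry u)
  uniformlyBoundedOn : ∀ S, UniformlyBoundedOn u (Icc (-S) S)
  eq_add_integral : ∀ t x, u t x = g x + ∫ s in (0:ℝ)..t, nonlocalOp W D (u s) x

section Existence

variable {W : ℝ → ℝ → ℝ} {D g : ℝ → ℝ} {K : ℝ≥0} {CW Cg : ℝ}

theorem measurable_picardLimit (hD : LipschitzWith K D) (hW : ∀ x y, |W x y| ≤ CW)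
    (hWm : Measurable (Function.uncurry W)) (hgm : Measurable g) (hg : ∀ x, |g x| ≤ Cg) :
    Measurable (Function.uncurry (picardLimit W D g)) :=
  measurable_of_tendsto_metrizable (measurable_picardIter hD hWm hgm)
    (tendsto_pi_nhds.2 fun p => tendsto_picardIter hD hW hWm hgm hg p.1 p.2)

theorem uniformlyBoundedOn_picardLimit (hD : LipschitzWith K D) (hW : ∀ x y, |W x y| ≤ CW)
    (hWm : Measurable (Function.uncurry W)) (hgm : Measurable g) (hg : ∀ x, |g x| ≤ Cg)
    (S : ℝ) : UniformlyBoundedOn (picardLimit W D g) (Icc (-S) S) := by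
  obtain ⟨n, hn⟩ := (Metric.tendstoUniformlyOn_iff.1
    (tendstoUniformlyOn_picardIter hD hW hWm hgm hg S) 1 one_pos).exists
  obtain ⟨M, hM⟩ := uniformlyBoundedOn_picardIter hD hW hg S n
  refine ⟨M + 1, fun t ht x => ?_⟩
  have h := hn (t, x) ⟨ht, trivial⟩
  rw [Real.dist_eq] at h
  linarith [abs_sub_abs_le_abs_sub (picardLimit W D g t x) (picardIter W D g n t x), hM t ht x]

theorem picardLimit_eq_add_integral (hD : LipschitzWith K D) (hW : ∀ x y, |W x y| ≤ CW)
    (hWm : Measurable (Function.uncurry W)) (hgm : Measurable g) (hg : ∀ x, |g x| ≤ Cg)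
    (t x : ℝ) : picardLimit W D g t x =
      g x + ∫ s in (0:ℝ)..t, nonlocalOp W D (picardLimit W D g s) x := by
  have hCW : 0 ≤ CW := (abs_nonneg _).trans (hW 0 0)
  have hunif := Metric.tendstoUniformlyOn_iff.1 (tendstoUniformlyOn_picardIter hD hW hWm hgm hg |t|)
  have hint : Tendsto (fun n => ∫ s in (0:ℝ)..t, nonlocalOp W D (picardIter W D g n s) x) atTop
      (𝓝 (∫ s in (0:ℝ)..t, nonlocalOp W D (picardLimit W D g s) x)) := by
    refine Metric.tendsto_nhds.2 fun ε hε => ?_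
    set C := 2 * K * CW * |t|
    have hδ : 0 < ε / (C + 1) := by positivity
    filter_upwards [hunif _ hδ] with n hn
    have hstep := abs_integral_nonlocalOp_sub_le (n := 0) hD hW hWm
      (measurable_picardIter hD hWm hgm n) (measurable_picardLimit hD hW hWm hgm hg)
      (uniformlyBoundedOn_picardIter hD hW hg |t| n)
      (uniformlyBoundedOn_picardLimit hD hW hWm hgm hg |t|) (subset_univ _) hδ.le
      (fun s hs y _ => by
        rw [pow_zero, mul_one, ← Real.dist_eq, dist_comm]
        exact (hn (s, y) ⟨hs, trivial⟩).le)
      (abs_le.1 le_rfl) (mem_univ x)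
    rw [Real.dist_eq]
    calc _ ≤ C * (ε / (C + 1)) := hstep.trans_eq (by simp only [C]; ring)
      _ < ε := by rw [mul_div_assoc']; exact (div_lt_iff₀ (by positivity)).2 (by linarith)
  exact tendsto_nhds_unique ((tendsto_picardIter hD hW hWm hgm hg t x).comp
    (tendsto_add_atTop_nat 1)) (tendsto_const_nhds.add hint)

theorem isMildSolution_picardLimit (hD : LipschitzWith K D) (hW : ∀ x y, |W x y| ≤ CW)
    (hWm : Measurable (Function.uncurry W)) (hgm : Measurable g) (hg : ∀ x, |g x| ≤ Cg) :
    IsMildSolution W D g (picardLimit W D g) :=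
  ⟨measurable_picardLimit hD hW hWm hgm hg, uniformlyBoundedOn_picardLimit hD hW hWm hgm hg,
    picardLimit_eq_add_integral hD hW hWm hgm hg⟩

end Existence

namespace IsMildSolution

variable {W : ℝ → ℝ → ℝ} {D g : ℝ → ℝ} {K : ℝ≥0} {CW : ℝ} {u : ℝ → ℝ → ℝ}

theorem exists_abs_sub_le_mul (hu : IsMildSolution W D g u) (hD : LipschitzWith K D)
    (hW : ∀ x y, |W x y| ≤ CW) (hWm : Measurable (Function.uncurry W)) (S : ℝ) :
    ∃ C, ∀ t₁ ∈ Icc (-S) S, ∀ t₂ ∈ Icc (-S) S, ∀ y, |u t₁ y - u t₂ y| ≤ C * |t₁ - t₂| := by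
  obtain ⟨M, hM⟩ := hu.uniformlyBoundedOn S
  refine ⟨CW * (|D 0| + K * (2 * M)), fun t₁ h₁ t₂ h₂ y => ?_⟩
  rw [hu.eq_add_integral t₁ y, hu.eq_add_integral t₂ y, add_sub_add_left_eq_sub,
    intervalIntegral.integral_interval_sub_left
      (intervalIntegrable_nonlocalOp hD hW hWm hu.measurable ⟨M, hM⟩ h₁ y)
      (intervalIntegrable_nonlocalOp hD hW hWm hu.measurable ⟨M, hM⟩ h₂ y)]
  exact abs_integral_nonlocalOp_le hD hW
    (fun s hs => hM s (uIoc_subset_uIcc.trans (uIcc_subset_Icc h₂ h₁) hs)) y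

theorem continuous_nonlocalOp (hu : IsMildSolution W D g u) (hD : LipschitzWith K D)
    (hW : ∀ x y, |W x y| ≤ CW) (hWm : Measurable (Function.uncurry W)) (x : ℝ) :
    Continuous fun t => nonlocalOp W D (u t) x := by
  refine continuous_iff_continuousAt.2 fun t₀ => ?_
  set S := |t₀| + 1
  obtain ⟨M, hM⟩ := hu.uniformlyBoundedOn S
  obtain ⟨C, hC⟩ := hu.exists_abs_sub_le_mul hD hW hWm S
  have hlip : LipschitzOnWith (2 * K * CW * C).toNNReal (fun t => nonlocalOp W D (u t) x)
      (Icc (-S) S) := LipschitzOnWith.of_dist_le_mul fun t₁ h₁ t₂ h₂ => by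
    rw [Real.dist_eq, Real.dist_eq]
    refine (abs_nonlocalOp_sub_le hD hW hWm (hu.measurable.comp measurable_prodMk_left)
      (hu.measurable.comp measurable_prodMk_left) (hM t₁ h₁) (hM t₂ h₂) (subset_univ _)
      (mem_univ x) fun y _ => hC t₁ h₁ t₂ h₂ y).trans ?_
    rw [← mul_assoc]
    exact mul_le_mul_of_nonneg_right (Real.le_coe_toNNReal _) (abs_nonneg _)
  exact hlip.continuousOn.continuousAt
    (Icc_mem_nhds (by linarith [neg_abs_le t₀]) (by linarith [le_abs_self t₀]))

theorem hasDerivAt (hu : IsMildSolution W D g u) (hD : LipschitzWith K D)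
    (hW : ∀ x y, |W x y| ≤ CW) (hWm : Measurable (Function.uncurry W)) (t x : ℝ) :
    HasDerivAt (fun s => u s x) (nonlocalOp W D (u t) x) t := by
  rw [show (fun s => u s x) = fun s => g x + ∫ r in (0:ℝ)..s, nonlocalOp W D (u r) x from
    funext fun s => hu.eq_add_integral s x]
  exact (intervalIntegral.integral_hasDerivAt_right
    (intervalIntegrable_nonlocalOp hD hW hWm hu.measurable (hu.uniformlyBoundedOn |t|)
      (abs_le.1 le_rfl) x)
    ((measurable_nonlocalOp hD hWm hu.measurable).comp
      measurable_prodMk_right).stronglyMeasurable.stronglyMeasurableAtFilter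
    (hu.continuous_nonlocalOp hD hW hWm x).continuousAt).const_add (g x)

theorem eq_of_hasDerivAt (hu : IsMildSolution W D g u) (hD : LipschitzWith K D)
    (hW : ∀ x y, |W x y| ≤ CW) (hWm : Measurable (Function.uncurry W)) {T : ℝ}
    {v : ℝ → ℝ → ℝ} (hvm : Measurable (Function.uncurry v))
    (hvb : UniformlyBoundedOn v (Icc (-T) T)) (hv0 : ∀ x, v 0 x = g x)
    (hvd : ∀ t ∈ Icc (-T) T, ∀ x ∈ Icc (0:ℝ) 1,
      HasDerivAt (fun s => v s x) (nonlocalOp W D (v t) x) t)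
    (hvc : ∀ x ∈ Icc (0:ℝ) 1, ContinuousOn (fun t => nonlocalOp W D (v t) x) (Icc (-T) T))
    {t : ℝ} (ht : t ∈ Icc (-T) T) {x : ℝ} (hx : x ∈ Icc (0:ℝ) 1) : v t x = u t x := by
  have hCW : 0 ≤ CW := (abs_nonneg _).trans (hW 0 0)
  obtain ⟨Mv, hMv⟩ := hvb
  obtain ⟨Mu, hMu⟩ := hu.uniformlyBoundedOn T
  refine sub_eq_zero.1 (eq_zero_of_volterra (A := |Mv| + |Mu|) (K := 2 * K * CW) (by positivity)
    (by positivity) (fun t x => v t x - u t x) (fun t ht x _ => ?_)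
    (fun n c hc hn t ht x hx => ?_) ht hx)
  · linarith [abs_sub (v t x) (u t x), hMv t ht x, hMu t ht x, le_abs_self Mv, le_abs_self Mu]
  · rw [eq_add_integral_of_hasDerivAt (fun s hs => hvd s hs x hx) (hvc x hx) ht, hv0,
      hu.eq_add_integral, add_sub_add_left_eq_sub]
    exact abs_integral_nonlocalOp_sub_le hD hW hWm hvm hu.measurable ⟨Mv, hMv⟩ ⟨Mu, hMu⟩
      subset_rfl hc hn ht hx

end IsMildSolution

end NonlocalHeat

theorem heat_equation_wellposed_general
    (D : ℝ → ℝ) (L : ℝ) (hD : ∀ a b : ℝ, |D a - D b| ≤ L * |a - b|)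
    (W : ℝ → ℝ → ℝ) (hWmeas : Measurable (Function.uncurry W))
    (CW : ℝ) (hWbd : ∀ x y, |W x y| ≤ CW)
    (g : ℝ → ℝ) (hgmeas : Measurable g) (Cg : ℝ) (hgbd : ∀ x, |g x| ≤ Cg)
    (T : ℝ) :
    ∃ u : ℝ → ℝ → ℝ,
      (Measurable (Function.uncurry u) ∧
       (∃ M, ∀ t ∈ Icc (-T) T, ∀ x, |u t x| ≤ M) ∧
       (∀ x, u 0 x = g x) ∧
       (∀ t ∈ Icc (-T) T, ∀ x ∈ Icc (0:ℝ) 1,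
         HasDerivAt (fun s => u s x)
           (∫ y in (0:ℝ)..1, W x y * D (u t y - u t x)) t) ∧
       (∀ x ∈ Icc (0:ℝ) 1, ContinuousOn
         (fun t => ∫ y in (0:ℝ)..1, W x y * D (u t y - u t x)) (Icc (-T) T))) ∧
      (∀ v : ℝ → ℝ → ℝ,
        (Measurable (Function.uncurry v) ∧
         (∃ M, ∀ t ∈ Icc (-T) T, ∀ x, |v t x| ≤ M) ∧
         (∀ x, v 0 x = g x) ∧
         (∀ t ∈ Icc (-T) T, ∀ x ∈ Icc (0:ℝ) 1,
           HasDerivAt (fun s => v s x)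
             (∫ y in (0:ℝ)..1, W x y * D (v t y - v t x)) t) ∧
         (∀ x ∈ Icc (0:ℝ) 1, ContinuousOn
           (fun t => ∫ y in (0:ℝ)..1, W x y * D (v t y - v t x)) (Icc (-T) T))) →
        ∀ t ∈ Icc (-T) T, ∀ x ∈ Icc (0:ℝ) 1, v t x = u t x) := by
  have hDlip : LipschitzWith L.toNNReal D := LipschitzWith.of_dist_le_mul fun a b => by
    simpa only [Real.dist_eq] using
      (hD a b).trans (mul_le_mul_of_nonneg_right (Real.le_coe_toNNReal L) (abs_nonneg _))
  have hu := NonlocalHeat.isMildSolution_picardLimit hDlip hWbd hWmeas hgmeas hgbd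
  refine ⟨NonlocalHeat.picardLimit W D g, ⟨hu.measurable, hu.uniformlyBoundedOn T, fun x => ?_,
    fun t _ x _ => hu.hasDerivAt hDlip hWbd hWmeas t x,
    fun x _ => (hu.continuous_nonlocalOp hDlip hWbd hWmeas x).continuousOn⟩, ?_⟩
  · simpa using hu.eq_add_integral 0 x
  · rintro v ⟨hvm, hvb, hv0, hvd, hvc⟩ t ht x hx
    exact hu.eq_of_hasDerivAt hDlip hWbd hWmeas hvm hvb hv0 hvd hvc ht hx

/-- Well-posedness of the IVP for the nonlocal heat equation
`∂u/∂t(x,t) = ∫_0^1 W(x,y) D(u(y,t) − u(x,t)) dy`, `u(x,0) = g(x)`: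
for every `T > 0` there is a unique continuously differentiable (in time) bounded
solution on `[−T, T]`. -/
theorem heat_equation_wellposed
    (D : ℝ → ℝ) (L : ℝ) (hD : ∀ a b : ℝ, |D a - D b| ≤ L * |a - b|)
    (W : ℝ → ℝ → ℝ) (hWmeas : Measurable (Function.uncurry W))
    (CW : ℝ) (hWbd : ∀ x y, |W x y| ≤ CW)
    (g : ℝ → ℝ) (hgmeas : Measurable g) (Cg : ℝ) (hgbd : ∀ x, |g x| ≤ Cg)
    (T : ℝ) (hT : 0 < T) :
    ∃ u : ℝ → ℝ → ℝ,
      (Measurable (Function.uncurry u) ∧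
       (∃ M, ∀ t ∈ Icc (-T) T, ∀ x, |u t x| ≤ M) ∧
       (∀ x, u 0 x = g x) ∧
       (∀ t ∈ Icc (-T) T, ∀ x ∈ Icc (0:ℝ) 1,
         HasDerivAt (fun s => u s x)
           (∫ y in (0:ℝ)..1, W x y * D (u t y - u t x)) t) ∧
       (∀ x ∈ Icc (0:ℝ) 1, ContinuousOn
         (fun t => ∫ y in (0:ℝ)..1, W x y * D (u t y - u t x)) (Icc (-T) T))) ∧
      (∀ v : ℝ → ℝ → ℝ,
        (Measurable (Function.uncurry v) ∧
         (∃ M, ∀ t ∈ Icc (-T) T, ∀ x, |v t x| ≤ M) ∧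
         (∀ x, v 0 x = g x) ∧
         (∀ t ∈ Icc (-T) T, ∀ x ∈ Icc (0:ℝ) 1,
           HasDerivAt (fun s => v s x)
             (∫ y in (0:ℝ)..1, W x y * D (v t y - v t x)) t) ∧
         (∀ x ∈ Icc (0:ℝ) 1, ContinuousOn
           (fun t => ∫ y in (0:ℝ)..1, W x y * D (v t y - v t x)) (Icc (-T) T))) →
        ∀ t ∈ Icc (-T) T, ∀ x ∈ Icc (0:ℝ) 1, v t x = u t x) :=
  heat_equation_wellposed_general D L hD W hWmeas CW hWbd g hgmeas Cg hgbd T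
end

section
/- Let D : ℝ → ℝ be Lipschitz with constant L and W ∈ L^∞([0,1]²). Then the map F : L^∞([0,1]) → L^∞([0,1]) given by F(u)(x) = ∫_0^1 W(x,y) D(u(y) − u(x)) dy is Lipschitz continuous with Lipschitz constant at most 2 L ‖W‖_{L^∞([0,1]²)}. -/
/-!
Since `D` is `L`-Lipschitz, the integrands of `F u` and `F v` at `x` differ by at most
`‖W‖_∞ L (|u y - v y| + |u x - v x|) ≤ 2 L ‖W‖_∞ ‖u - v‖_∞` for almost every `y`, and this bound
holds for almost every `x` because almost every slice `W x ·` is bounded by `‖W‖_∞`. Integrating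
over `[0,1]` gives the claim. Since a non-integrable function has Bochner integral `0`, the
integrands must first be shown integrable (they are bounded on a finite measure space) before the
difference of the integrals can be written as the integral of the difference.
-/

open MeasureTheory Set
open scoped ENNReal NNReal

theorem LipschitzWith.comp_memLp_top {α E F : Type*} [MeasurableSpace α] {μ : Measure α}
    [NormedAddCommGroup E] [NormedAddCommGroup F] {K : ℝ≥0} {g : E → F} {f : α → E}
    (hg : LipschitzWith K g) (hf : MemLp f ∞ μ) : MemLp (g ∘ f) ∞ μ := by
  have h : MemLp ((fun t => g t - g 0) ∘ f) ∞ μ :=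
    (hg.sub (LipschitzWith.const (g 0))).comp_memLp (sub_self _) hf
  convert h.add (memLp_top_const (g 0)) using 1
  ext; simp

theorem MeasureTheory.MemLp.ae_prodMk_left_top {α β E : Type*} [MeasurableSpace α]
    [MeasurableSpace β] [NormedAddCommGroup E] {μ : Measure α} {ν : Measure β} [SFinite ν]
    {f : α × β → E} (hf : MemLp f ∞ (μ.prod ν)) :
    ∀ᵐ x ∂μ, MemLp (fun y => f (x, y)) ∞ ν := by
  have hbound := Measure.ae_ae_of_ae_prod (ae_le_eLpNormEssSup (f := f) (μ := μ.prod ν))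
  filter_upwards [hf.1.prodMk_left, hbound] with x hx_meas hx_bound
  refine ⟨hx_meas, ?_⟩
  rw [eLpNorm_exponent_top]
  exact (eLpNormEssSup_le_of_ae_enorm_bound hx_bound).trans_lt
    (by simpa [eLpNorm_exponent_top] using hf.2)

section NonlocalOperator

variable {α : Type*} [MeasurableSpace α] {μ : Measure α} {W : α → α → ℝ} {D : ℝ → ℝ}
  {K : ℝ≥0} {u v : α → ℝ}

variable (μ W D) in
noncomputable def nonlocalOperator (u : α → ℝ) (x : α) : ℝ := ∫ y, W x y * D (u y - u x) ∂μ

lemma integrable_nonlocalOperator_integrand [IsFiniteMeasure μ] (hD : LipschitzWith K D) {x : α}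
    (hW : MemLp (W x) ∞ μ) (hu : MemLp u ∞ μ) :
    Integrable (fun y => W x y * D (u y - u x)) μ :=
  ((hD.comp_memLp_top (hu.sub (memLp_top_const (u x)))).mul hW).integrable le_top

lemma enorm_nonlocalOperator_sub_le (hD : LipschitzWith K D) {x : α}
    (hu : Integrable (fun y => W x y * D (u y - u x)) μ)
    (hv : Integrable (fun y => W x y * D (v y - v x)) μ) {M C : ℝ≥0∞}
    (hW : ∀ᵐ y ∂μ, ‖W x y‖ₑ ≤ M) (huv : ∀ᵐ y ∂μ, ‖u y - v y‖ₑ ≤ C) (hx : ‖u x - v x‖ₑ ≤ C) :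
    ‖nonlocalOperator μ W D u x - nonlocalOperator μ W D v x‖ₑ ≤ 2 * K * M * C * μ univ := by
  have hpointwise : ∀ᵐ y ∂μ,
      ‖W x y * D (u y - u x) - W x y * D (v y - v x)‖ₑ ≤ 2 * K * M * C := by
    filter_upwards [hW, huv] with y hWy huvy
    have hdiff : ‖(u y - u x) - (v y - v x)‖ₑ ≤ 2 * C := by
      calc ‖(u y - u x) - (v y - v x)‖ₑ = ‖(u y - v y) - (u x - v x)‖ₑ := by congr 1; ring
        _ ≤ C + C := enorm_sub_le.trans (add_le_add huvy hx)
        _ = 2 * C := (two_mul C).symm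
    calc ‖W x y * D (u y - u x) - W x y * D (v y - v x)‖ₑ
        = ‖W x y‖ₑ * edist (D (u y - u x)) (D (v y - v x)) := by
          rw [← mul_sub, enorm_mul, edist_eq_enorm_sub]
      _ ≤ M * (K * (2 * C)) := by
          gcongr
          exact (hD _ _).trans (by rw [edist_eq_enorm_sub]; gcongr)
      _ = 2 * K * M * C := by ring
  calc ‖nonlocalOperator μ W D u x - nonlocalOperator μ W D v x‖ₑ
      = ‖∫ y, W x y * D (u y - u x) - W x y * D (v y - v x) ∂μ‖ₑ := by
        rw [nonlocalOperator, nonlocalOperator, integral_sub hu hv]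
    _ ≤ ∫⁻ y, ‖W x y * D (u y - u x) - W x y * D (v y - v x)‖ₑ ∂μ :=
        enorm_integral_le_lintegral_enorm _
    _ ≤ ∫⁻ _, 2 * K * M * C ∂μ := lintegral_mono_ae hpointwise
    _ = 2 * K * M * C * μ univ := lintegral_const _

theorem eLpNorm_nonlocalOperator_sub_le [IsFiniteMeasure μ] (hD : LipschitzWith K D)
    (hW : MemLp (Function.uncurry W) ∞ (μ.prod μ)) (hu : MemLp u ∞ μ) (hv : MemLp v ∞ μ) :
    eLpNorm (nonlocalOperator μ W D u - nonlocalOperator μ W D v) ∞ μ ≤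
      2 * K * eLpNorm (Function.uncurry W) ∞ (μ.prod μ) * eLpNorm (u - v) ∞ μ * μ univ := by
  have hW_bound := Measure.ae_ae_of_ae_prod
    (ae_le_eLpNormEssSup (f := Function.uncurry W) (μ := μ.prod μ))
  have huv_bound := ae_le_eLpNormEssSup (f := u - v) (μ := μ)
  rw [eLpNorm_exponent_top, eLpNorm_exponent_top, eLpNorm_exponent_top]
  refine eLpNormEssSup_le_of_ae_enorm_bound ?_
  filter_upwards [hW.ae_prodMk_left_top, hW_bound, huv_bound] with x hWx hWx_bound hx
  exact enorm_nonlocalOperator_sub_le hD (integrable_nonlocalOperator_integrand hD hWx hu)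
    (integrable_nonlocalOperator_integrand hD hWx hv) hWx_bound huv_bound hx

end NonlocalOperator

theorem nonlocal_operator_lipschitz_general
    (D : ℝ → ℝ) (L : ℝ) (hD : ∀ a b : ℝ, |D a - D b| ≤ L * |a - b|)
    (W : ℝ → ℝ → ℝ)
    (hWmem : MemLp (fun p : ℝ × ℝ => W p.1 p.2) ⊤
      (volume.restrict (Icc 0 1 ×ˢ Icc 0 1)))
    (u v : ℝ → ℝ)
    (hu : MemLp u ⊤ (volume.restrict (Icc (0:ℝ) 1)))
    (hv : MemLp v ⊤ (volume.restrict (Icc (0:ℝ) 1))) :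
    eLpNorm (fun x => (∫ y in (0:ℝ)..1, W x y * D (u y - u x)) -
        (∫ y in (0:ℝ)..1, W x y * D (v y - v x))) ⊤ (volume.restrict (Icc (0:ℝ) 1))
      ≤ ENNReal.ofReal (2 * L) *
        eLpNorm (fun p : ℝ × ℝ => W p.1 p.2) ⊤ (volume.restrict (Icc 0 1 ×ˢ Icc 0 1)) *
        eLpNorm (fun x => u x - v x) ⊤ (volume.restrict (Icc (0:ℝ) 1)) := by
  set μ := volume.restrict (Icc (0:ℝ) 1)
  have hprod : volume.restrict (Icc (0:ℝ) 1 ×ˢ Icc (0:ℝ) 1) = μ.prod μ := by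
    rw [Measure.prod_restrict, ← Measure.volume_eq_prod]
  have hF : (fun x => (∫ y in (0:ℝ)..1, W x y * D (u y - u x)) -
      ∫ y in (0:ℝ)..1, W x y * D (v y - v x)) =
      nonlocalOperator μ W D u - nonlocalOperator μ W D v := by
    ext x
    simp only [Pi.sub_apply, nonlocalOperator, intervalIntegral.integral_of_le zero_le_one,
      μ, integral_Icc_eq_integral_Ioc]
  have h2L : ENNReal.ofReal (2 * L) = 2 * L.toNNReal := by
    rw [ENNReal.ofReal_mul zero_le_two, ENNReal.ofReal_ofNat]; rfl
  rw [hprod] at hWmem ⊢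
  rw [hF, h2L]
  have hμ : μ univ = 1 := by simp [μ]
  refine (eLpNorm_nonlocalOperator_sub_le
    (LipschitzWith.of_dist_le' hD) hWmem hu hv).trans_eq ?_
  rw [hμ, mul_one]
  rfl

/-- The nonlocal operator `F(u)(x) = ∫_0^1 W(x,y) D(u(y) − u(x)) dy` is Lipschitz on
`L^∞([0,1])` with constant at most `2 L ‖W‖_{L^∞([0,1]²)}`. -/
theorem nonlocal_operator_lipschitz
    (D : ℝ → ℝ) (L : ℝ) (hL : 0 ≤ L) (hD : ∀ a b : ℝ, |D a - D b| ≤ L * |a - b|)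
    (W : ℝ → ℝ → ℝ) (hWmeas : Measurable (Function.uncurry W))
    (hWmem : MemLp (fun p : ℝ × ℝ => W p.1 p.2) ⊤
      (volume.restrict (Icc 0 1 ×ˢ Icc 0 1)))
    (u v : ℝ → ℝ) (humeas : Measurable u) (hvmeas : Measurable v)
    (hu : MemLp u ⊤ (volume.restrict (Icc (0:ℝ) 1)))
    (hv : MemLp v ⊤ (volume.restrict (Icc (0:ℝ) 1))) :
    eLpNorm (fun x => (∫ y in (0:ℝ)..1, W x y * D (u y - u x)) -
        (∫ y in (0:ℝ)..1, W x y * D (v y - v x))) ⊤ (volume.restrict (Icc (0:ℝ) 1))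
      ≤ ENNReal.ofReal (2 * L) *
        eLpNorm (fun p : ℝ × ℝ => W p.1 p.2) ⊤ (volume.restrict (Icc 0 1 ×ˢ Icc 0 1)) *
        eLpNorm (fun x => u x - v x) ⊤ (volume.restrict (Icc (0:ℝ) 1)) :=
  nonlocal_operator_lipschitz_general D L hD W hWmem u v hu hv
end
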